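/- Let A be a left brace of cardinality p^n for a prime p > 3 and a natural number n, whose additive group (A, +) is a direct sum of cyclic groups all of the same order p^α for some α ≥ 1. Suppose that, with c = ⌊(p − 1)/4⌋, e'_c(a, b) ∈ p·A for all a, b ∈ A. Then A satisfies Property 1; that is, in addition, for every i ≥ 1, a ∈ A and b ∈ ann(p^i) one has e'_c(a, b) ∈ ann(p^{i−1}). -/
import Mathlib


/-- A left brace: `(A, +)` abelian group, `(A, ∘)` a group (with identity `cone`
and inverse `cinv`), satisfying `a ∘ (b + c) + a = a ∘ b + a ∘ c`. -/
class LeftBrace (A : Type*) extends AddCommGroup A where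
  circ : A → A → A
  cone : A
  cinv : A → A
  circ_assoc : ∀ a b c : A, circ (circ a b) c = circ a (circ b c)
  circ_cone : ∀ a : A, circ a cone = a
  cone_circ : ∀ a : A, circ cone a = a
  circ_cinv : ∀ a : A, circ a (cinv a) = cone
  cinv_circ : ∀ a : A, circ (cinv a) a = cone
  circ_add : ∀ a b c : A, circ a (b + c) + a = circ a b + circ a c

namespace LeftBrace

variable {A : Type*} [LeftBrace A]

/-- The brace operation `a * b = a ∘ b - a - b`. -/
def bstar (a b : A) : A := circ a b - a - b

/-- `ann (p^i) = {a : p^i • a = 0}`. -/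
def ann (p i : ℕ) : Set A := {a : A | (p ^ i : ℕ) • a = 0}

/-- `p^i • A = {p^i • a : a ∈ A}`. -/
def pA (p i : ℕ) : Set A := Set.range (fun a : A => (p ^ i : ℕ) • a)

/-- An ideal of a left brace: an additive subgroup closed under `*` on both sides. -/
def IsIdeal (I : Set A) : Prop :=
  (0 : A) ∈ I ∧ (∀ x ∈ I, ∀ y ∈ I, x + y ∈ I) ∧ (∀ x ∈ I, -x ∈ I) ∧
  (∀ a : A, ∀ x ∈ I, bstar a x ∈ I) ∧ (∀ a : A, ∀ x ∈ I, bstar x a ∈ I)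

/-- `eIter a b m = e'_m(a,b)` for `m ≥ 1`, with `eIter a b 0 = b`;
so `e'_1(a,b) = a * b` and `e'_{m+1}(a,b) = a * e'_m(a,b)`. -/
def eIter (a b : A) : ℕ → A
  | 0 => b
  | m + 1 => bstar a (eIter a b m)

/-- `circPow a j = a^{∘ j}`, the `j`-fold `∘`-product of `a` with itself. -/
def circPow (a : A) : ℕ → A
  | 0 => cone
  | j + 1 => circ a (circPow a j)

/-- Property 1 (with `c = ⌊(p-1)/4⌋`). -/
def Property1 (p : ℕ) (A : Type*) [LeftBrace A] : Prop :=
  (∀ a b : A, eIter a b ((p - 1) / 4) ∈ pA p 1) ∧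
  (∀ i : ℕ, 1 ≤ i → ∀ a : A, ∀ b ∈ ann p i, eIter a b ((p - 1) / 4) ∈ ann p (i - 1))

end LeftBrace

open LeftBrace

section Aux

variable {A : Type*} [LeftBrace A]

lemma bstar_zero' (a : A) : bstar a 0 = 0 := by
  have h := circ_add a 0 0
  rw [add_zero] at h
  have h2 : circ a (0:A) = a := add_left_cancel h.symm
  simp [bstar, h2]

lemma bstar_add' (a x y : A) : bstar a (x + y) = bstar a x + bstar a y := by
  have h := circ_add a x y
  unfold bstar
  have : circ a (x + y) = circ a x + circ a y - a := by
    rw [← h]; abel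
  rw [this]; abel

lemma bstar_nsmul' (a : A) (k : ℕ) (x : A) : bstar a (k • x) = k • bstar a x := by
  induction k with
  | zero => simp [bstar_zero']
  | succ m ih => rw [succ_nsmul, succ_nsmul, bstar_add', ih]

lemma eIter_nsmul' (a : A) (k : ℕ) (b : A) (m : ℕ) :
    eIter a (k • b) m = k • eIter a b m := by
  induction m with
  | zero => rfl
  | succ m ih => simp only [eIter, ih, bstar_nsmul']

end Aux

lemma zmod_div_lemma (p α : ℕ) (hp : p.Prime) (hα : 1 ≤ α) (x : ZMod (p ^ α))
    (hx : p • x = 0) : ∃ y : ZMod (p ^ α), x = p ^ (α - 1) • y := by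
  haveI : NeZero (p ^ α) := ⟨pow_ne_zero _ hp.ne_zero⟩
  have hx' : ((p * x.val : ℕ) : ZMod (p ^ α)) = 0 := by
    push_cast [ZMod.natCast_val, ZMod.cast_id]
    rw [← nsmul_eq_mul] at *
    exact hx
  have hdvd : p ^ α ∣ p * x.val := (ZMod.natCast_eq_zero_iff _ _).mp hx'
  have hdvd2 : p ^ (α - 1) ∣ x.val := by
    have hd : p ^ (α - 1) * p ∣ p * x.val := by
      rw [← pow_succ]
      have hαeq : α - 1 + 1 = α := by omega
      rw [hαeq]
      exact hdvd
    rcases hd with ⟨k, hk⟩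
    refine ⟨k, ?_⟩
    have hpne : 0 < p := hp.pos
    have : p * x.val = p * (p ^ (α - 1) * k) := by rw [hk]; ring
    exact Nat.eq_of_mul_eq_mul_left hpne this
  rcases hdvd2 with ⟨k, hk⟩
  refine ⟨(k : ZMod (p ^ α)), ?_⟩
  have hxx : ((x.val : ℕ) : ZMod (p ^ α)) = x := by
    simp [ZMod.natCast_val, ZMod.cast_id]
  rw [← hxx, hk]
  push_cast
  rw [nsmul_eq_mul]
  push_cast
  ring

theorem statement11 {A : Type*} [LeftBrace A] [Fintype A] (p n α : ℕ) (hp : p.Prime)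
    (hp3 : 3 < p) (hcard : Fintype.card A = p ^ n) (hα : 1 ≤ α)
    (ι : Type) [Fintype ι] (e : A ≃+ (ι → ZMod (p ^ α)))
    (h1 : ∀ a b : A, eIter a b ((p - 1) / 4) ∈ pA p 1) :
    Property1 p A := by
  haveI : NeZero (p ^ α) := ⟨pow_ne_zero _ hp.ne_zero⟩
  -- every element of A is killed by p^α
  have hexp : ∀ x : A, (p ^ α : ℕ) • x = 0 := by
    intro x
    have : e ((p ^ α : ℕ) • x) = 0 := by
      rw [map_nsmul]
      funext i
      simp only [Pi.smul_apply, Pi.zero_apply, nsmul_eq_mul, ZMod.natCast_self, zero_mul]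
    have h2 := congrArg e.symm this
    rw [map_zero] at h2
    rwa [e.symm_apply_apply] at h2
  -- elements killed by p lie in p^(α-1) • A
  have hannp : ∀ x : A, p • x = 0 → ∃ y : A, x = (p ^ (α - 1) : ℕ) • y := by
    intro x hx
    have hx' : ∀ i, p • (e x i) = 0 := by
      intro i
      have : e (p • x) = 0 := by rw [hx]; simp
      rw [map_nsmul] at this
      exact congrFun this i
    choose w hw using fun i => zmod_div_lemma p α hp hα (e x i) (hx' i)
    refine ⟨e.symm w, ?_⟩
    have : e x = (p ^ (α - 1) : ℕ) • w := funext hw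
    calc x = e.symm (e x) := by simp
    _ = e.symm ((p ^ (α - 1) : ℕ) • w) := by rw [this]
    _ = (p ^ (α - 1) : ℕ) • e.symm w := map_nsmul _ _ _
  refine ⟨h1, ?_⟩
  intro i hi a b hb
  show (p ^ (i - 1) : ℕ) • eIter a b ((p - 1) / 4) = 0
  rw [← eIter_nsmul']
  set b₁ : A := (p ^ (i - 1) : ℕ) • b with hb₁
  have hb₁p : p • b₁ = 0 := by
    rw [hb₁, smul_smul]
    have : p * p ^ (i - 1) = p ^ i := by
      rw [← pow_succ']
      congr 1
      omega
    rw [this]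
    exact hb
  obtain ⟨b', hb'⟩ := hannp b₁ hb₁p
  rw [hb', eIter_nsmul']
  obtain ⟨x, hx⟩ := h1 a b'
  rw [← hx, smul_smul, pow_one, ← pow_succ]
  have : α - 1 + 1 = α := by omega
  rw [this]
  exact hexp x
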